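/- Let W be an (n−1)-dimensional complex vector space and w₁,…,wₙ ∈ W vectors such that every (n−1)-element subset of {w₁,…,wₙ} is a basis of W. If a linear functional on Sym²W vanishes on all elements σ_{kl} = w_k w_l + Σ_{j≠k,l} wⱼ² (k < l) and additionally Σwᵢ = 0, then the functional is zero. -/

import Mathlib

/-! The numbers `a k l = f (w_k w_l)` form a matrix whose rows sum to zero (as `Σ wᵢ = 0`) and
whose off-diagonal entries are fixed by its diagonal (as `f (σ_{kl}) = 0`). Summing the rows gives
`(n² - 3n + 1) · tr a = 0`, and `n² - 3n + 1` has no integer root, so `a = 0`. Any `n - 1` of the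
`wᵢ` form a basis, so the products `w_k w_l` span `Sym²W` and `f` vanishes. -/

open MvPolynomial Finset Submodule Pointwise

theorem Nat.sq_add_one_ne_three_mul (n : ℕ) : n ^ 2 + 1 ≠ 3 * n := by
  rcases le_or_gt n 2 with h | h
  · interval_cases n <;> omega
  · nlinarith

section MatrixRows

variable {ι : Type*} [Fintype ι] [DecidableEq ι]

theorem Finset.sum_filter_ne_and_ne {M : Type*} [AddCommGroup M] (d : ι → M) {k l : ι}
    (hkl : k ≠ l) :
    ∑ j ∈ univ.filter (fun j => j ≠ k ∧ j ≠ l), d j = ∑ j, d j - d k - d l := by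
  have hpair : univ.filter (fun j => j ≠ k ∧ j ≠ l) = univ \ {k, l} := by
    ext j
    simp [not_or]
  rw [hpair, sum_sdiff_eq_sub (subset_univ _), sum_pair hkl, sub_sub]

/-- Comparing the row `k` of `a` with that of `b k l = a k k + a l l - tr a`, which agrees with
it off the diagonal. -/
theorem Matrix.sub_one_mul_diag_eq_of_sum_row {K : Type*} [CommRing K] {a : Matrix ι ι K}
    (hrow : ∀ k, ∑ l, a k l = 0)
    (hoff : ∀ k l, k ≠ l → a k l = a k k + a l l - a.trace) (k : ι) :
    ((Fintype.card ι : K) - 1) * a k k = ((Fintype.card ι : K) - 2) * a.trace := by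
  have hrest : ∑ l ∈ univ.erase k, a k l = ∑ l ∈ univ.erase k, (a k k + a l l - a.trace) :=
    sum_congr rfl fun l hl => hoff k l (ne_of_mem_erase hl).symm
  have hb : ∑ l, (a k k + a l l - a.trace) =
      Fintype.card ι * a k k + a.trace - Fintype.card ι * a.trace := by
    simp only [sum_sub_distrib, sum_add_distrib, sum_const, card_univ, nsmul_eq_mul,
      Matrix.trace, Matrix.diag]
  have ha := add_sum_erase univ (a k) (mem_univ k)
  have hb' := add_sum_erase univ (fun l => a k k + a l l - a.trace) (mem_univ k)
  rw [hrow, hrest] at ha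
  rw [hb] at hb'
  linear_combination ha - hb'

theorem Matrix.eq_zero_of_sum_row_eq_zero_of_offDiag {K : Type*} [CommRing K] [IsDomain K]
    [CharZero K] (hcard : Fintype.card ι ≠ 1)
    {a : Matrix ι ι K} (hrow : ∀ k, ∑ l, a k l = 0)
    (hoff : ∀ k l, k ≠ l →
      a k l + ∑ j ∈ univ.filter (fun j => j ≠ k ∧ j ≠ l), a j j = 0) :
    a = 0 := by
  have hoff' : ∀ k l, k ≠ l → a k l = a k k + a l l - a.trace := fun k l hkl => by
    have h := hoff k l hkl
    rw [sum_filter_ne_and_ne _ hkl] at h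
    simp only [Matrix.trace, Matrix.diag]
    linear_combination h
  have hdiag := sub_one_mul_diag_eq_of_sum_row hrow hoff'
  have htrace : a.trace = 0 := by
    have hsum : ((Fintype.card ι : K) - 1) * a.trace =
        Fintype.card ι * ((Fintype.card ι - 2) * a.trace) := by
      simp only [Matrix.trace, Matrix.diag, mul_sum, hdiag, sum_const, card_univ, nsmul_eq_mul]
    have hquad : (Fintype.card ι : K) ^ 2 - 3 * Fintype.card ι + 1 ≠ 0 := by
      rw [sub_add_eq_add_sub, sub_ne_zero]
      exact_mod_cast Nat.sq_add_one_ne_three_mul _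
    refine (mul_eq_zero.1 ?_).resolve_left hquad
    linear_combination -hsum
  have hn : (Fintype.card ι : K) - 1 ≠ 0 := sub_ne_zero.2 (by exact_mod_cast hcard)
  have hdiag0 : ∀ k, a k k = 0 := fun k =>
    (mul_eq_zero.1 ((hdiag k).trans (by rw [htrace, mul_zero]))).resolve_left hn
  ext k l
  rcases eq_or_ne k l with rfl | hkl
  · exact hdiag0 k
  · rw [hoff' k l hkl, hdiag0, hdiag0, htrace, Matrix.zero_apply]
    ring

end MatrixRows

theorem LinearMap.map_mul_eq_zero_of_mem_span {R A M : Type*} [CommSemiring R] [Semiring A]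
    [Algebra R A] [AddCommMonoid M] [Module R M] (f : A →ₗ[R] M) {s : Set A}
    (hs : ∀ p ∈ s, ∀ q ∈ s, f (p * q) = 0) {p q : A} (hp : p ∈ span R s)
    (hq : q ∈ span R s) :
    f (p * q) = 0 := by
  have hpq : p * q ∈ span R (s * s) := span_mul_span R s s ▸ mul_mem_mul hp hq
  refine span_le (p := LinearMap.ker f) |>.2 ?_ hpq
  rintro _ ⟨p, hp, q, hq, rfl⟩
  exact hs p hp q hq

theorem LinearIndependent.span_range_eq_top_of_compl {K V : Type*} [DivisionRing K]
    [AddCommGroup V] [Module K V] [FiniteDimensional K V] {n : ℕ} {w : Fin n → V} {i : Fin n}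
    (hw : LinearIndependent K (fun j : {j : Fin n // j ≠ i} => w j))
    (hdim : Module.finrank K V = n - 1) : span K (Set.range w) = ⊤ := by
  refine eq_top_iff.2 (le_of_eq_of_le (hw.span_eq_top_of_card_eq_finrank' ?_).symm
    (span_mono (Set.range_comp_subset_range Subtype.val w)))
  simp [Fintype.card_subtype_compl, hdim]

/-- dual spanning lemma: Let `W = ℂⁿ⁻¹` and `w₁,…,wₙ ∈ W` with `Σ wᵢ = 0` and
every `(n−1)`-element subset a basis (in particular linearly independent). Model `Sym²W` as
the span of quadratic monomials in `MvPolynomial (Fin (n-1)) ℂ`, with a vector `u`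
corresponding to the linear form `ℓ(u) = Σ uᵢ • Xᵢ`. If a linear functional vanishes on all
`σ_{kl} = w_k w_l + Σ_{j≠k,l} wⱼ²` (for `k < l`), then it vanishes on all of `Sym²W`. -/
theorem dual_spanning (n : ℕ) (hn : 2 ≤ n)
    (w : Fin n → (Fin (n - 1) → ℂ))
    (hgen : ∀ i : Fin n, LinearIndependent ℂ (fun j : {j : Fin n // j ≠ i} => w j))
    (hsum : ∑ i : Fin n, w i = 0)
    (ℓ : (Fin (n - 1) → ℂ) → MvPolynomial (Fin (n - 1)) ℂ)
    (hℓ : ∀ u, ℓ u = ∑ i : Fin (n - 1), u i • X i)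
    (σ : {p : Fin n × Fin n // p.1 < p.2} → MvPolynomial (Fin (n - 1)) ℂ)
    (hσ : ∀ kl, σ kl = ℓ (w kl.1.1) * ℓ (w kl.1.2)
      + ∑ j ∈ Finset.univ.filter (fun j => j ≠ kl.1.1 ∧ j ≠ kl.1.2), (ℓ (w j)) ^ 2)
    (f : MvPolynomial (Fin (n - 1)) ℂ →ₗ[ℂ] ℂ)
    (hf : ∀ kl, f (σ kl) = 0) :
    ∀ q ∈ Submodule.span ℂ {q | ∃ i j : Fin (n - 1), q = X i * X j}, f q = 0 := by
  classical
  obtain rfl : ℓ = Fintype.linearCombination ℂ X := funext hℓ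
  set L := Fintype.linearCombination ℂ (X : Fin (n - 1) → MvPolynomial (Fin (n - 1)) ℂ)
  have hσ' : ∀ k l, k < l → f (L (w k) * L (w l))
      + ∑ j ∈ univ.filter (fun j => j ≠ k ∧ j ≠ l), f (L (w j) * L (w j)) = 0 :=
    fun k l h => by simpa [hσ, sq] using hf ⟨(k, l), h⟩
  have hprod : ∀ k l, f (L (w k) * L (w l)) = 0 := by
    refine congrFun₂ (Matrix.eq_zero_of_sum_row_eq_zero_of_offDiag (by simp; omega) ?_ ?_)
    · intro k
      rw [← map_sum, ← mul_sum, ← map_sum, hsum, map_zero, mul_zero, map_zero]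
    · intro k l hkl
      rcases hkl.lt_or_gt with h | h
      · exact hσ' k l h
      · simpa [mul_comm, and_comm] using hσ' l k h
  have hw : span ℂ (Set.range w) = ⊤ :=
    (hgen ⟨0, by omega⟩).span_range_eq_top_of_compl (by simp)
  have hX : ∀ i, X i ∈ span ℂ (Set.range (L ∘ w)) := by
    rw [Set.range_comp, span_image, hw, Submodule.map_top, Fintype.range_linearCombination]
    exact fun i => subset_span ⟨i, rfl⟩
  intro q hq
  refine span_le (p := LinearMap.ker f) |>.2 ?_ hq
  rintro _ ⟨i, j, rfl⟩
  refine f.map_mul_eq_zero_of_mem_span ?_ (hX i) (hX j)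
  rintro _ ⟨k, rfl⟩ _ ⟨l, rfl⟩
  exact hprod k l
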